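/- Let Q be an integer with ⌈1+n/2⌉ ≤ Q ≤ n, and suppose z ∈ X satisfies m_{⌈1+n/2⌉}(z) ≤ 2·m_Q(w) for every point w ∈ X (i.e., z is Q well positioned). Then for every u ∈ X, dist(z,u) ≤ 3·m_Q(u). -/

import Mathlib

/-!
The closed balls of radii `m_H(z)` and `m_Q(u)`, with `H = ⌈1 + n/2⌉`, contain at least `H` and
`Q` points of `V`; since `H + Q > n` they share a point `v`, and the triangle inequality through
`v` gives `dist z u ≤ m_H(z) + m_Q(u) ≤ 2·m_Q(u) + m_Q(u)`.
-/

open Finset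

/-- The `Q`-quantile distance of `u` to the finite point set `V`: the smallest radius `r`
such that the closed ball of radius `r` around `u` contains at least `Q` points of `V`. -/
noncomputable def medDist {X : Type*} [MetricSpace X] (V : Finset X) (Q : ℕ) (u : X) : ℝ :=
  sInf {r : ℝ | Q ≤ (V.filter fun v => dist u v ≤ r).card}

/- The infimum defining `medDist` is attained: the admissible radii form a closed set, being the
finite union over `Q`-subsets `t ⊆ V` of the intervals `[max_{v ∈ t} dist u v, ∞)`. -/
lemma isClosed_setOf_le_card_filter_le {ι α : Type*} [TopologicalSpace α] [Preorder α]
    [DecidableLE α] [ClosedIciTopology α] (s : Finset ι) (f : ι → α) (n : ℕ) :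
    IsClosed {r : α | n ≤ #(s.filter fun i => f i ≤ r)} := by
  have hunion : {r : α | n ≤ #(s.filter fun i => f i ≤ r)} =
      ⋃ t ∈ s.powersetCard n, ⋂ i ∈ t, Set.Ici (f i) := by
    ext r
    simp only [Set.mem_ofPred_eq, Set.mem_iUnion, Set.mem_iInter, Set.mem_Ici, mem_powersetCard,
      exists_prop]
    constructor
    · intro h
      obtain ⟨t, hts, rfl⟩ := exists_subset_card_eq h
      exact ⟨t, ⟨fun i hi => (mem_filter.1 (hts hi)).1, rfl⟩,
        fun i hi => (mem_filter.1 (hts hi)).2⟩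
    · rintro ⟨t, ⟨hts, rfl⟩, ht⟩
      exact card_le_card fun i hi => mem_filter.2 ⟨hts hi, ht i hi⟩
  rw [hunion]
  exact isClosed_biUnion_finset fun t _ => isClosed_biInter fun i _ => isClosed_Ici

lemma le_card_filter_dist_le_medDist {X : Type*} [MetricSpace X] (V : Finset X) {Q : ℕ}
    (hQV : Q ≤ #V) (u : X) : Q ≤ #(V.filter fun v => dist u v ≤ medDist V Q u) := by
  rcases Q.eq_zero_or_pos with rfl | hQ
  · exact Nat.zero_le _
  refine (isClosed_setOf_le_card_filter_le V (dist u) Q).csInf_mem ?_ ?_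
  · refine ⟨∑ v ∈ V, dist u v, ?_⟩
    rwa [Set.mem_ofPred_eq, filter_true_of_mem fun v hv =>
      single_le_sum (f := dist u) (fun w _ => dist_nonneg) hv]
  · refine ⟨0, fun r hr => ?_⟩
    obtain ⟨v, hv⟩ := card_pos.1 (hQ.trans_le hr)
    exact dist_nonneg.trans (mem_filter.1 hv).2

lemma dist_le_medDist_add_medDist {X : Type*} [MetricSpace X] (V : Finset X) {Q₁ Q₂ : ℕ}
    (hQ₁ : Q₁ ≤ #V) (hQ₂ : Q₂ ≤ #V) (hV : #V < Q₁ + Q₂) (x y : X) :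
    dist x y ≤ medDist V Q₁ x + medDist V Q₂ y := by
  classical
  obtain ⟨v, hv⟩ := inter_nonempty_of_card_lt_card_add_card (filter_subset _ V)
    (filter_subset _ V) <| hV.trans_le <| add_le_add
      (le_card_filter_dist_le_medDist V hQ₁ x) (le_card_filter_dist_le_medDist V hQ₂ y)
  rw [mem_inter, mem_filter, mem_filter] at hv
  calc dist x y ≤ dist x v + dist y v := dist_triangle_right x y v
    _ ≤ medDist V Q₁ x + medDist V Q₂ y := add_le_add hv.1.2 hv.2.2

/-- Let `⌈1+n/2⌉ ≤ Q ≤ n` and suppose `z` is `Q` well positioned, i.e.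
`m_{⌈1+n/2⌉}(z) ≤ 2·m_Q(w)` for every point `w` of the space. Then for every point `u`,
`dist z u ≤ 3·m_Q(u)`. -/
theorem stmt16 {X : Type*} [MetricSpace X] (V : Finset X) (Q : ℕ)
    (hQlo : (V.card + 1) / 2 + 1 ≤ Q) (hQhi : Q ≤ V.card)
    (z : X) (hz : ∀ w : X, medDist V ((V.card + 1) / 2 + 1) z ≤ 2 * medDist V Q w) :
    ∀ u : X, dist z u ≤ 3 * medDist V Q u := by
  intro u
  have hzu := dist_le_medDist_add_medDist V (Q₁ := (#V + 1) / 2 + 1) (by omega) hQhi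
    (by omega) z u
  linarith [hz u]
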